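/- Let m : ℝ → ℝ be continuous, σ ∈ ℕ, and let z : ℝ × ℝ → ℝ⁴ be a C¹ solution of M ∂ₜz + m(t) K ∂ₓz = ∇S₁(z) + m(t) ∇S₂(z). Let ξ, η : ℝ × ℝ → ℝ⁴ be C¹ solutions of the variational equation M ∂ₜζ + m(t) K ∂ₓζ = Hess S₁(z(t,x)) ζ + m(t) Hess S₂(z(t,x)) ζ, and assume there is a compact set C ⊆ ℝ such that ξ(t,x) = 0 and η(t,x) = 0 whenever x ∉ C and t ∈ [t₀,t₁]. Then the global symplectic form is preserved: ∫_ℝ ⟨ξ(t₁,x), M η(t₁,x)⟩ dx = ∫_ℝ ⟨ξ(t₀,x), M η(t₀,x)⟩ dx (the phase flow preserves the symplectic structure ω̄ = ∫ dp ∧ dq dx). -/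

import Mathlib

open scoped BigOperators Matrix

noncomputable section

/-- Euclidean inner product on `ℝ⁴`. -/
def dot4 (x y : Fin 4 → ℝ) : ℝ := ∑ i, x i * y i

/-- The matrix `M` of the multi-symplectic formulation. -/
def Mmat : Matrix (Fin 4) (Fin 4) ℝ :=
  !![0, -1, 0, 0; 1, 0, 0, 0; 0, 0, 0, 0; 0, 0, 0, 0]

/-- The matrix `K` of the multi-symplectic formulation. -/
def Kmat : Matrix (Fin 4) (Fin 4) ℝ :=
  !![0, 0, 1, 0; 0, 0, 0, 1; -1, 0, 0, 0; 0, -1, 0, 0]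

/-- `S₁(p,q,v,w) = −(p²+q²)^{σ+1}/(2σ+2)`. -/
def S1 (σ : ℕ) (z : Fin 4 → ℝ) : ℝ :=
  -(z 0 ^ 2 + z 1 ^ 2) ^ (σ + 1) / (2 * (σ : ℝ) + 2)

/-- `S₂(p,q,v,w) = −(v²+w²)/2`. -/
def S2 (z : Fin 4 → ℝ) : ℝ := -(z 2 ^ 2 + z 3 ^ 2) / 2

/-- The gradient of `f : ℝ⁴ → ℝ`: the vector of partial derivatives. -/
def grad4 (f : (Fin 4 → ℝ) → ℝ) (z : Fin 4 → ℝ) : Fin 4 → ℝ :=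
  fun i => fderiv ℝ f z (Pi.single i 1)

/-- The Hessian of `f : ℝ⁴ → ℝ` at `z` applied to a vector `ζ`: the derivative of the
gradient at `z` in the direction `ζ`. -/
def hess4 (f : (Fin 4 → ℝ) → ℝ) (z ζ : Fin 4 → ℝ) : Fin 4 → ℝ :=
  fderiv ℝ (grad4 f) z ζ

/-- Partial derivative in the first (time) variable. -/
def pt (z : ℝ × ℝ → Fin 4 → ℝ) (t x : ℝ) : Fin 4 → ℝ := deriv (fun s => z (s, x)) t

/-- Partial derivative in the second (space) variable. -/
def px (z : ℝ × ℝ → Fin 4 → ℝ) (t x : ℝ) : Fin 4 → ℝ := deriv (fun y => z (t, y)) x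


open MeasureTheory

/-!
For two solutions `ξ`, `η` of the variational equation, the symmetry of the Hessians of `S₁`, `S₂`
and the skew-symmetry of `M` and `K` give the local conservation law
`∂ₜ⟨ξ, Mη⟩ + m(t) ∂ₓ⟨ξ, Kη⟩ = 0`. The flux term integrates to zero over `ℝ` since `ξ`, `η` have
compact support in `x`; integrating the law over `[t₀, t₁] × ℝ` and swapping the order of
integration (Fubini) gives the claim.
-/

open Matrix Set

lemma dot4_eq_dotProduct (x y : Fin 4 → ℝ) : dot4 x y = x ⬝ᵥ y := rfl

lemma Mmat_transpose : Mmatᵀ = -Mmat := by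
  ext i j; fin_cases i <;> fin_cases j <;> simp [Mmat]

lemma Kmat_transpose : Kmatᵀ = -Kmat := by
  ext i j; fin_cases i <;> fin_cases j <;> simp [Kmat]

lemma dotProduct_mulVec_of_transpose_eq_neg {n R : Type*} [Fintype n] [CommRing R]
    {A : Matrix n n R} (hA : Aᵀ = -A) (u v : n → R) : (A *ᵥ u) ⬝ᵥ v = -(u ⬝ᵥ (A *ᵥ v)) := by
  rw [dotProduct_comm, dotProduct_mulVec, ← mulVec_transpose, hA, neg_mulVec, neg_dotProduct,
    dotProduct_comm]

/-- Pointwise form of `∂ₜ⟨a, M b⟩ = -c ∂ₓ⟨a, K b⟩` for two solutions `a`, `b` of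
`M ∂ₜζ + c K ∂ₓζ = H ζ` with `H` symmetric. -/
theorem multisymplectic_conservation_law {n R : Type*} [Fintype n] [CommRing R]
    {M K : Matrix n n R} (hM : Mᵀ = -M) (hK : Kᵀ = -K) {c : R}
    {a b a_t b_t a_x b_x u v : n → R} (hsymm : u ⬝ᵥ b = a ⬝ᵥ v)
    (ha : M *ᵥ a_t + c • K *ᵥ a_x = u) (hb : M *ᵥ b_t + c • K *ᵥ b_x = v) :
    a_t ⬝ᵥ (M *ᵥ b) + a ⬝ᵥ (M *ᵥ b_t) = -(c * (a_x ⬝ᵥ (K *ᵥ b) + a ⬝ᵥ (K *ᵥ b_x))) := by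
  subst ha hb
  simp only [add_dotProduct, dotProduct_add, smul_dotProduct, dotProduct_smul, smul_eq_mul,
    dotProduct_mulVec_of_transpose_eq_neg hM, dotProduct_mulVec_of_transpose_eq_neg hK] at hsymm
  linear_combination -hsymm

section Hessian

variable {f : (Fin 4 → ℝ) → ℝ}

lemma hess4_apply (hf : ContDiff ℝ 2 f) (z u : Fin 4 → ℝ) (i : Fin 4) :
    hess4 f z u i = fderiv ℝ (fderiv ℝ f) z u (Pi.single i 1) := by
  have hdf : DifferentiableAt ℝ (fderiv ℝ f) z :=
    (hf.fderiv_right (m := 1) le_rfl).differentiable one_ne_zero z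
  let T : ((Fin 4 → ℝ) →L[ℝ] ℝ) →L[ℝ] Fin 4 → ℝ :=
    ContinuousLinearMap.pi fun i => ContinuousLinearMap.apply ℝ ℝ (Pi.single i 1)
  have hT : grad4 f = T ∘ fderiv ℝ f := rfl
  rw [hess4, hT, (T.hasFDerivAt.comp z hdf.hasFDerivAt).fderiv]
  rfl

lemma hess4_dotProduct (hf : ContDiff ℝ 2 f) (z u v : Fin 4 → ℝ) :
    hess4 f z u ⬝ᵥ v = fderiv ℝ (fderiv ℝ f) z u v := by
  conv_rhs => rw [pi_eq_sum_univ' v]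
  simp [dotProduct, hess4_apply hf, mul_comm]

lemma hess4_dotProduct_comm (hf : ContDiff ℝ 2 f) (z u v : Fin 4 → ℝ) :
    hess4 f z u ⬝ᵥ v = u ⬝ᵥ hess4 f z v := by
  rw [hess4_dotProduct hf, dotProduct_comm, hess4_dotProduct hf,
    hf.contDiffAt.isSymmSndFDerivAt (by simp)]

end Hessian

lemma contDiff_S1 (σ : ℕ) : ContDiff ℝ 2 (S1 σ) := by
  unfold S1; fun_prop

lemma contDiff_S2 : ContDiff ℝ 2 S2 := by
  unfold S2; fun_prop

theorem HasDerivAt.dotProduct {n : Type*} [Fintype n] {f g : ℝ → n → ℝ} {f' g' : n → ℝ} {t : ℝ}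
    (hf : HasDerivAt f f' t) (hg : HasDerivAt g g' t) :
    HasDerivAt (fun s => f s ⬝ᵥ g s) (f' ⬝ᵥ g t + f t ⬝ᵥ g') t := by
  simp only [_root_.dotProduct, ← Finset.sum_add_distrib]
  exact HasDerivAt.fun_sum fun i _ => (hasDerivAt_pi.1 hf i).mul (hasDerivAt_pi.1 hg i)

theorem HasDerivAt.const_mulVec {m n : Type*} [Fintype n] (A : Matrix m n ℝ) {g : ℝ → n → ℝ}
    {g' : n → ℝ} {t : ℝ} (hg : HasDerivAt g g' t) :
    HasDerivAt (fun s => A *ᵥ g s) (A *ᵥ g') t :=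
  hasDerivAt_pi.2 fun i => by
    simpa [mulVec] using (hasDerivAt_const t (A i)).dotProduct hg

section PartialDerivatives

variable {w : ℝ × ℝ → Fin 4 → ℝ}

lemma hasDerivAt_pt (hw : Differentiable ℝ w) (t x : ℝ) :
    HasDerivAt (fun s => w (s, x)) (pt w t x) t :=
  ((hw (t, x)).comp t (by fun_prop)).hasDerivAt

lemma hasDerivAt_px (hw : Differentiable ℝ w) (t x : ℝ) :
    HasDerivAt (fun y => w (t, y)) (px w t x) x :=
  ((hw (t, x)).comp x (by fun_prop)).hasDerivAt

lemma px_eq_fderiv (hw : Differentiable ℝ w) (t x : ℝ) :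
    px w t x = fderiv ℝ w (t, x) (0, 1) :=
  ((hw (t, x)).hasFDerivAt.comp_hasDerivAt x
    ((hasDerivAt_const x t).prodMk (hasDerivAt_id x))).deriv

lemma continuous_px (hw : ContDiff ℝ 1 w) : Continuous fun p : ℝ × ℝ => px w p.1 p.2 := by
  simp only [px_eq_fderiv (hw.differentiable one_ne_zero)]
  exact (hw.continuous_fderiv one_ne_zero).clm_apply continuous_const

end PartialDerivatives

theorem integrable_prod_restrict_Ioc_of_continuous {ψ : ℝ × ℝ → ℝ} (hψ : Continuous ψ)
    {t₀ t₁ : ℝ} {C : Set ℝ} (hC : IsCompact C)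
    (hψC : ∀ t ∈ Icc t₀ t₁, ∀ x ∉ C, ψ (t, x) = 0) :
    Integrable (Function.uncurry fun x t => ψ (t, x))
      ((volume : Measure ℝ).prod (volume.restrict (Ioc t₀ t₁))) := by
  rw [← Measure.restrict_univ (μ := (volume : Measure ℝ)), Measure.prod_restrict,
    Measure.restrict_univ, ← Measure.volume_eq_prod]
  have hcompact : IntegrableOn (fun p : ℝ × ℝ => ψ (p.2, p.1)) (C ×ˢ Icc t₀ t₁) :=
    (hψ.comp continuous_swap).continuousOn.integrableOn_compact (hC.prod isCompact_Icc)
  refine hcompact.of_forall_sdiff_eq_zero (MeasurableSet.univ.prod measurableSet_Ioc) ?_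
  rintro ⟨x, t⟩ ⟨⟨-, ht⟩, hxt⟩
  exact hψC t (Ioc_subset_Icc_self ht) x fun hx => hxt ⟨hx, Ioc_subset_Icc_self ht⟩

theorem integral_eq_of_hasDerivAt_of_integral_eq_zero {ω ψ : ℝ × ℝ → ℝ} (hψ : Continuous ψ)
    {t₀ t₁ : ℝ} (ht : t₀ ≤ t₁) {C : Set ℝ} (hC : IsCompact C)
    (hderiv : ∀ x, ∀ t ∈ Icc t₀ t₁, HasDerivAt (fun s => ω (s, x)) (ψ (t, x)) t)
    (hψC : ∀ t ∈ Icc t₀ t₁, ∀ x ∉ C, ψ (t, x) = 0)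
    (hψ_int : ∀ t ∈ Icc t₀ t₁, ∫ x, ψ (t, x) = 0)
    (hω₀ : Integrable fun x => ω (t₀, x)) :
    ∫ x, ω (t₁, x) = ∫ x, ω (t₀, x) := by
  have hint := integrable_prod_restrict_Ioc_of_continuous hψ hC hψC
  have hFTC : ∀ x, ω (t₁, x) = ω (t₀, x) + ∫ t in Ioc t₀ t₁, ψ (t, x) := by
    intro x
    have hψx : Continuous fun t => ψ (t, x) := by fun_prop
    rw [← intervalIntegral.integral_of_le ht, intervalIntegral.integral_eq_sub_of_hasDerivAt
      (f := fun s => ω (s, x)) (by rw [uIcc_of_le ht]; exact hderiv x)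
      (hψx.intervalIntegrable _ _)]
    ring
  calc ∫ x, ω (t₁, x)
      = (∫ x, ω (t₀, x)) + ∫ x, ∫ t in Ioc t₀ t₁, ψ (t, x) := by
        simp only [hFTC]; exact integral_add hω₀ hint.integral_prod_left
    _ = (∫ x, ω (t₀, x)) + ∫ t in Ioc t₀ t₁, ∫ x, ψ (t, x) := by
        rw [integral_integral_swap hint]
    _ = ∫ x, ω (t₀, x) := by
        rw [setIntegral_eq_zero_of_forall_eq_zero fun t ht => hψ_int t (Ioc_subset_Icc_self ht),
          add_zero]

section SymplecticDensity

variable {ξ η : ℝ × ℝ → Fin 4 → ℝ}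

def fluxDeriv (ξ η : ℝ × ℝ → Fin 4 → ℝ) (p : ℝ × ℝ) : ℝ :=
  px ξ p.1 p.2 ⬝ᵥ (Kmat *ᵥ η p) + ξ p ⬝ᵥ (Kmat *ᵥ px η p.1 p.2)

lemma hasDerivAt_flux (hξ : Differentiable ℝ ξ) (hη : Differentiable ℝ η) (t x : ℝ) :
    HasDerivAt (fun y => ξ (t, y) ⬝ᵥ (Kmat *ᵥ η (t, y))) (fluxDeriv ξ η (t, x)) x :=
  (hasDerivAt_px hξ t x).dotProduct ((hasDerivAt_px hη t x).const_mulVec Kmat)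

lemma continuous_fluxDeriv (hξ : ContDiff ℝ 1 ξ) (hη : ContDiff ℝ 1 η) :
    Continuous (fluxDeriv ξ η) := by
  have := continuous_px hξ
  have := continuous_px hη
  have := hξ.continuous
  have := hη.continuous
  unfold fluxDeriv
  fun_prop

lemma integrable_dotProduct_mulVec (hξ : Continuous ξ) (hη : Continuous η)
    (A : Matrix (Fin 4) (Fin 4) ℝ) {t : ℝ} {C : Set ℝ} (hC : IsCompact C)
    (hsupp : ∀ x ∉ C, ξ (t, x) = 0 ∧ η (t, x) = 0) :
    Integrable fun x => ξ (t, x) ⬝ᵥ (A *ᵥ η (t, x)) :=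
  (by fun_prop : Continuous _).integrable_of_hasCompactSupport
    (HasCompactSupport.intro hC fun x hx => by simp [hsupp x hx])

lemma integral_fluxDeriv_eq_zero (hξ : ContDiff ℝ 1 ξ) (hη : ContDiff ℝ 1 η) {t : ℝ}
    {C : Set ℝ} (hC : IsCompact C) (hsupp : ∀ x ∉ C, ξ (t, x) = 0 ∧ η (t, x) = 0) :
    ∫ x, fluxDeriv ξ η (t, x) = 0 :=
  integral_eq_zero_of_hasDerivAt_of_integrable
    (hasDerivAt_flux (hξ.differentiable one_ne_zero) (hη.differentiable one_ne_zero) t)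
    (((continuous_fluxDeriv hξ hη).comp (by fun_prop)).integrable_of_hasCompactSupport
      (HasCompactSupport.intro hC fun x hx => by simp [fluxDeriv, hsupp x hx]))
    (integrable_dotProduct_mulVec hξ.continuous hη.continuous Kmat hC hsupp)

lemma hasDerivAt_symplecticDensity (hξ : Differentiable ℝ ξ) (hη : Differentiable ℝ η)
    {H : (Fin 4 → ℝ) → Fin 4 → ℝ} (hH : ∀ u v, H u ⬝ᵥ v = u ⬝ᵥ H v) {c t x : ℝ}
    (hξeq : Mmat *ᵥ pt ξ t x + c • Kmat *ᵥ px ξ t x = H (ξ (t, x)))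
    (hηeq : Mmat *ᵥ pt η t x + c • Kmat *ᵥ px η t x = H (η (t, x))) :
    HasDerivAt (fun s => ξ (s, x) ⬝ᵥ (Mmat *ᵥ η (s, x))) (-(c * fluxDeriv ξ η (t, x))) t := by
  rw [fluxDeriv, ← multisymplectic_conservation_law Mmat_transpose Kmat_transpose
    (hH _ _) hξeq hηeq]
  exact (hasDerivAt_pt hξ t x).dotProduct ((hasDerivAt_pt hη t x).const_mulVec Mmat)

end SymplecticDensity

theorem stmt_1_general (m : ℝ → ℝ) (hm : Continuous m) (σ : ℕ)
    (z ξ η : ℝ × ℝ → Fin 4 → ℝ)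
    (hξ : ContDiff ℝ 1 ξ) (hη : ContDiff ℝ 1 η)
    (hξeq : ∀ t x : ℝ,
      Mmat.mulVec (pt ξ t x) + m t • Kmat.mulVec (px ξ t x)
        = hess4 (S1 σ) (z (t, x)) (ξ (t, x)) + m t • hess4 S2 (z (t, x)) (ξ (t, x)))
    (hηeq : ∀ t x : ℝ,
      Mmat.mulVec (pt η t x) + m t • Kmat.mulVec (px η t x)
        = hess4 (S1 σ) (z (t, x)) (η (t, x)) + m t • hess4 S2 (z (t, x)) (η (t, x)))
    (t₀ t₁ : ℝ) (ht : t₀ ≤ t₁)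
    (C : Set ℝ) (hC : IsCompact C)
    (hsupp : ∀ t x : ℝ, t ∈ Set.Icc t₀ t₁ → x ∉ C → ξ (t, x) = 0 ∧ η (t, x) = 0) :
    ∫ x : ℝ, dot4 (ξ (t₁, x)) (Mmat.mulVec (η (t₁, x)))
      = ∫ x : ℝ, dot4 (ξ (t₀, x)) (Mmat.mulVec (η (t₀, x))) := by
  simp only [dot4_eq_dotProduct]
  have hsymm : ∀ t x u v,
      (hess4 (S1 σ) (z (t, x)) u + m t • hess4 S2 (z (t, x)) u) ⬝ᵥ v
        = u ⬝ᵥ (hess4 (S1 σ) (z (t, x)) v + m t • hess4 S2 (z (t, x)) v) := by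
    intro t x u v
    simp only [add_dotProduct, dotProduct_add, smul_dotProduct, dotProduct_smul,
      hess4_dotProduct_comm (contDiff_S1 σ), hess4_dotProduct_comm contDiff_S2]
  have hψ : Continuous fun p : ℝ × ℝ => -(m p.1 * fluxDeriv ξ η p) := by
    have := continuous_fluxDeriv hξ hη
    fun_prop
  refine integral_eq_of_hasDerivAt_of_integral_eq_zero (ω := fun p => ξ p ⬝ᵥ (Mmat *ᵥ η p))
    hψ ht hC
    (fun x t _ => hasDerivAt_symplecticDensity (hξ.differentiable one_ne_zero)
      (hη.differentiable one_ne_zero) (hsymm t x) (hξeq t x) (hηeq t x)) ?_ ?_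
    (integrable_dotProduct_mulVec hξ.continuous hη.continuous Mmat hC
      fun x hx => hsupp t₀ x ⟨le_rfl, ht⟩ hx)
  · intro t ht x hx
    simp [fluxDeriv, hsupp t x ht hx]
  · intro t ht
    simp only [integral_neg, integral_const_mul,
      integral_fluxDeriv_eq_zero hξ hη hC fun x hx => hsupp t x ht hx, mul_zero, neg_zero]

/-- preservation of the global symplectic form
`ω̄ = ∫_ℝ ⟨ξ, Mη⟩ dx` for solutions of the variational equation of the nonlinear
Schrödinger equation with time-dependent dispersion, with spatial compact support. -/
theorem stmt_1 (m : ℝ → ℝ) (hm : Continuous m) (σ : ℕ)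
    (z ξ η : ℝ × ℝ → Fin 4 → ℝ)
    (hz : ContDiff ℝ 1 z) (hξ : ContDiff ℝ 1 ξ) (hη : ContDiff ℝ 1 η)
    (hzeq : ∀ t x : ℝ,
      Mmat.mulVec (pt z t x) + m t • Kmat.mulVec (px z t x)
        = grad4 (S1 σ) (z (t, x)) + m t • grad4 S2 (z (t, x)))
    (hξeq : ∀ t x : ℝ,
      Mmat.mulVec (pt ξ t x) + m t • Kmat.mulVec (px ξ t x)
        = hess4 (S1 σ) (z (t, x)) (ξ (t, x)) + m t • hess4 S2 (z (t, x)) (ξ (t, x)))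
    (hηeq : ∀ t x : ℝ,
      Mmat.mulVec (pt η t x) + m t • Kmat.mulVec (px η t x)
        = hess4 (S1 σ) (z (t, x)) (η (t, x)) + m t • hess4 S2 (z (t, x)) (η (t, x)))
    (t₀ t₁ : ℝ) (ht : t₀ ≤ t₁)
    (C : Set ℝ) (hC : IsCompact C)
    (hsupp : ∀ t x : ℝ, t ∈ Set.Icc t₀ t₁ → x ∉ C → ξ (t, x) = 0 ∧ η (t, x) = 0) :
    ∫ x : ℝ, dot4 (ξ (t₁, x)) (Mmat.mulVec (η (t₁, x)))
      = ∫ x : ℝ, dot4 (ξ (t₀, x)) (Mmat.mulVec (η (t₀, x))) :=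
  stmt_1_general m hm σ z ξ η hξ hη hξeq hηeq t₀ t₁ ht C hC hsupp
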